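/- Let A be a finite set of positive integers. If Γ_A does not have everywhere strong approximation, then there exist an integer k* ≥ 2 and a residue r such that every element of A is congruent to r modulo k*. -/

import Mathlib

/-- The generator matrix `[[0,1],[1,a]]`. -/
def cfGen (a : ℕ) : Matrix (Fin 2) (Fin 2) ℤ := !![0, 1; 1, (a : ℤ)]

/-- The determinant-one semigroup `Γ_A`: all nonempty finite products of the
generators `[[0,1],[1,a]]·[[0,1],[1,a']]` with `a, a' ∈ A`. -/
def GammaSemigroup (A : Set ℕ) : Set (Matrix (Fin 2) (Fin 2) ℤ) :=
  { M | ∃ l : List (ℕ × ℕ), l ≠ [] ∧ (∀ p ∈ l, p.1 ∈ A ∧ p.2 ∈ A) ∧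
      M = (l.map (fun p => cfGen p.1 * cfGen p.2)).prod }

/-- `Γ_A` has everywhere strong approximation if for every `q ≥ 2` its reduction
mod `q` is all of `SL₂(ℤ/qℤ)`. -/
def HasEverywhereStrongApprox (A : Set ℕ) : Prop :=
  ∀ q : ℕ, 2 ≤ q → ∀ M : Matrix (Fin 2) (Fin 2) (ZMod q), M.det = 1 →
    ∃ γ ∈ GammaSemigroup A, γ.map ((↑) : ℤ → ZMod q) = M

/-!
Reduced mod `q`, `Γ_A` is a nonempty subsemigroup of the finite group `SL₂(ℤ/q)`, hence a
subgroup. Writing `g_x = [[0,1],[1,x]]`, it contains `g_a g_b` for `a, b ∈ A`, hence the lower and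
upper elementary matrices `(g_a g_c)(g_c g_c)⁻¹` and `(g_c g_c)⁻¹(g_c g_a)` with entry `a - c`.
If `A` lies in no residue class modulo any `k ≥ 2`, the differences `a - c` generate `ℤ`, so the
image contains every elementary matrix. These generate `SL₂(ℤ/q)`: they contain the image of
`SL₂(ℤ) = ⟨S, T⟩`, which, through a row `(-n/d, m/d)`, clears the lower left entry of any matrix
whose first column lifts to `(m, n)`; what remains is upper triangular, hence elementary by
Whitehead's lemma.
-/

open Matrix MatrixGroups

theorem Subsemigroup.pow_succ_mem {M : Type*} [Monoid M] (S : Subsemigroup M) {x : M} (hx : x ∈ S)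
    (n : ℕ) : x ^ (n + 1) ∈ S := by
  induction n with
  | zero => simpa
  | succ n ih => rw [pow_succ]; exact S.mul_mem ih hx

def Subsemigroup.toSubgroupOfFinite {G : Type*} [Group G] [Finite G] (S : Subsemigroup G)
    (hS : (S : Set G).Nonempty) : Subgroup G where
  toSubsemigroup := S
  one_mem' := by
    obtain ⟨x, hx⟩ := hS
    rw [← pow_orderOf_eq_one x, ← Nat.sub_one_add_one (orderOf_pos x).ne']
    exact S.pow_succ_mem hx _
  inv_mem' {x} hx := by
    obtain ⟨n, hn⟩ := Nat.exists_eq_add_one_of_ne_zero (orderOf_pos x).ne'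
    have hinv : x ^ (n + n + 1) = x⁻¹ := by
      refine eq_inv_of_mul_eq_one_left ?_
      rw [← pow_succ, show n + n + 1 + 1 = (n + 1) * 2 by ring, pow_mul, ← hn,
        pow_orderOf_eq_one, one_pow]
    exact hinv ▸ S.pow_succ_mem hx _

theorem AddSubgroup.closure_sub_eq_top_of_forall_not_modEq {A : Set ℕ}
    (hA : ∀ k, 2 ≤ k → ∀ r, ∃ a ∈ A, ¬ a ≡ r [MOD k]) :
    AddSubgroup.closure {x : ℤ | ∃ a ∈ A, ∃ c ∈ A, x = a - c} = ⊤ := by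
  obtain ⟨d, hd⟩ := Int.subgroup_cyclic (AddSubgroup.closure {x : ℤ | ∃ a ∈ A, ∃ c ∈ A, x = a - c})
  have hmod : ∀ a ∈ A, ∀ c ∈ A, a ≡ c [MOD d.natAbs] := by
    intro a ha c hc
    obtain ⟨k, hk⟩ := AddSubgroup.mem_closure_singleton.1
      (hd ▸ AddSubgroup.subset_closure ⟨c, hc, a, ha, rfl⟩ : (c : ℤ) - a ∈ AddSubgroup.closure {d})
    exact Nat.modEq_iff_dvd.2 (Int.natAbs_dvd.2 ⟨k, by rw [← hk, smul_eq_mul, mul_comm]⟩)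
  have hd1 : d.natAbs = 1 := by
    by_contra hne
    obtain ⟨a₀, ha₀, -⟩ := hA 2 le_rfl 0
    obtain ⟨a, ha, hna⟩ := hA _ (Nat.minFac_prime hne).two_le a₀
    exact hna ((hmod a ha a₀ ha₀).of_dvd (Nat.minFac_dvd _))
  refine hd ▸ (AddSubgroup.eq_top_iff' _).2 fun x ↦ AddSubgroup.mem_closure_singleton.2 ?_
  rcases Int.natAbs_eq_iff.1 hd1 with rfl | rfl
  exacts [⟨x, by simp⟩, ⟨-x, by simp⟩]

theorem ModularGroup.exists_bottom_row_mul_add_eq_zero (m n : ℤ) :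
    ∃ γ : SL(2, ℤ), γ 1 0 * m + γ 1 1 * n = 0 := by
  rcases Nat.eq_zero_or_pos (Int.gcd m n) with h | h
  · obtain ⟨rfl, rfl⟩ := Int.gcd_eq_zero_iff.1 h
    exact ⟨1, by simp⟩
  set g : ℤ := (Int.gcd m n : ℤ)
  have hcop : IsCoprime (-(n / g)) (m / g) := by
    rw [Int.isCoprime_iff_gcd_eq_one, Int.gcd_comm, Int.gcd_neg]
    exact Int.gcd_div_gcd_div_gcd h
  obtain ⟨γ, -, hγ⟩ := ModularGroup.bottom_row_surj (R := ℤ) (a := ![-(n / g), m / g]) hcop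
  refine ⟨γ, ?_⟩
  have hm : m / g * g = m := Int.ediv_mul_cancel (Int.gcd_dvd_left m n)
  have hn : n / g * g = n := Int.ediv_mul_cancel (Int.gcd_dvd_right m n)
  rw [show γ 1 0 = -(n / g) from congrFun hγ 0, show γ 1 1 = m / g from congrFun hγ 1]
  linear_combination (n / g) * hm - (m / g) * hn

namespace Matrix.SpecialLinearGroup

variable {ι R : Type*} [Fintype ι] [DecidableEq ι] [CommRing R]

variable (ι R) in
def elementarySubgroup : Subgroup (SpecialLinearGroup ι R) :=
  Subgroup.closure {g | ∃ (i j : ι) (hij : i ≠ j) (x : R), transvection hij x = g}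

theorem transvection_mem_elementarySubgroup {i j : ι} (hij : i ≠ j) (x : R) :
    transvection hij x ∈ elementarySubgroup ι R :=
  Subgroup.subset_closure ⟨i, j, hij, x, rfl⟩

theorem transvection_intCast_mem_of_mem_closure {H : Subgroup (SpecialLinearGroup ι R)} {i j : ι}
    (hij : i ≠ j) {s : Set ℤ} (hs : ∀ x ∈ s, transvection hij (x : R) ∈ H) {x : ℤ}
    (hx : x ∈ AddSubgroup.closure s) : transvection hij (x : R) ∈ H := by
  induction hx using AddSubgroup.closure_induction with
  | mem x hx => exact hs x hx
  | zero => simp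
  | add x y _ _ hx hy => rw [Int.cast_add, transvection_add]; exact mul_mem hx hy
  | neg x _ hx => rw [Int.cast_neg, ← transvection_inv]; exact inv_mem hx

@[simp]
theorem coe_transvection_zero_one (h : (0 : Fin 2) ≠ 1) (x : R) :
    (transvection h x : Matrix (Fin 2) (Fin 2) R) = !![1, x; 0, 1] := by
  ext i j; fin_cases i <;> fin_cases j <;> simp [transvection_coe]

@[simp]
theorem coe_transvection_one_zero (h : (1 : Fin 2) ≠ 0) (x : R) :
    (transvection h x : Matrix (Fin 2) (Fin 2) R) = !![1, 0; x, 1] := by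
  ext i j; fin_cases i <;> fin_cases j <;> simp [transvection_coe]

theorem mem_elementarySubgroup_of_apply_one_zero_eq_zero {g : SL(2, R)} (hg : g 1 0 = 0) :
    g ∈ elementarySubgroup (Fin 2) R := by
  have huv : g 0 0 * g 1 1 = 1 := by
    have hdet := g.det_coe
    rwa [det_fin_two, hg, mul_zero, sub_zero] at hdet
  let U : R → SL(2, R) := transvection (zero_ne_one' (Fin 2))
  let L : R → SL(2, R) := transvection (one_ne_zero' (Fin 2))
  -- Whitehead: for `u = g 0 0`, `v = g 1 1` with `u * v = 1`, the antidiagonal matrices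
  -- `U u * L (-v) * U u` and `U (-1) * L 1 * U (-1)` multiply to `diag(u, v)`.
  have hdecomp : g = U (g 0 0) * L (-g 1 1) * U (g 0 0) * (U (-1) * L 1 * U (-1)) *
      U (g 1 1 * g 0 1) := by
    ext i j
    fin_cases i <;> fin_cases j <;> simp [U, L, hg] <;> grind
  rw [hdecomp]
  repeat' apply mul_mem
  all_goals exact transvection_mem_elementarySubgroup _ _

theorem map_intCastRingHom_mem_elementarySubgroup (γ : SL(2, ℤ)) :
    map (Int.castRingHom R) γ ∈ elementarySubgroup (Fin 2) R := by
  let U : R → SL(2, R) := transvection (zero_ne_one' (Fin 2))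
  let L : R → SL(2, R) := transvection (one_ne_zero' (Fin 2))
  have hS : map (Int.castRingHom R) ModularGroup.S = U (-1) * L 1 * U (-1) := by
    ext i j; fin_cases i <;> fin_cases j <;> simp [U, L, ModularGroup.coe_S]
  have hT : map (Int.castRingHom R) ModularGroup.T = U 1 := by
    ext i j; fin_cases i <;> fin_cases j <;> simp [U, ModularGroup.coe_T]
  have hST : Subgroup.closure {ModularGroup.S, ModularGroup.T} ≤
      (elementarySubgroup (Fin 2) R).comap (map (Int.castRingHom R)) := by
    rw [Subgroup.closure_le]
    rintro _ (rfl | rfl) <;> simp only [SetLike.mem_coe, Subgroup.mem_comap, hS, hT]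
    repeat' apply mul_mem
    all_goals exact transvection_mem_elementarySubgroup _ _
  exact hST (SpecialLinearGroup.SL2Z_generators ▸ Subgroup.mem_top γ)

theorem mem_elementarySubgroup_of_apply_eq_intCast {g : SL(2, R)} {m n : ℤ}
    (hm : g 0 0 = m) (hn : g 1 0 = n) : g ∈ elementarySubgroup (Fin 2) R := by
  obtain ⟨γ, hγ⟩ := ModularGroup.exists_bottom_row_mul_add_eq_zero m n
  have hγg : (map (Int.castRingHom R) γ * g) 1 0 = 0 := by
    simp only [coe_mul, map_apply_coe, RingHom.mapMatrix_apply, Int.coe_castRingHom, mul_apply,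
      map_apply, Fin.sum_univ_two, hm, hn]
    exact_mod_cast congrArg (Int.cast : ℤ → R) hγ
  exact (Subgroup.mul_mem_cancel_left _ (map_intCastRingHom_mem_elementarySubgroup γ)).1
    (mem_elementarySubgroup_of_apply_one_zero_eq_zero hγg)

theorem elementarySubgroup_zmod_eq_top (q : ℕ) : elementarySubgroup (Fin 2) (ZMod q) = ⊤ := by
  refine (Subgroup.eq_top_iff' _).2 fun g ↦ ?_
  obtain ⟨m, hm⟩ := ZMod.intCast_surjective (g 0 0)
  obtain ⟨n, hn⟩ := ZMod.intCast_surjective (g 1 0)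
  exact mem_elementarySubgroup_of_apply_eq_intCast hm.symm hn.symm

end Matrix.SpecialLinearGroup

section cfGenPair

variable {R : Type*} [CommRing R]

def cfGenPair (x y : R) : SL(2, R) :=
  ⟨!![0, 1; 1, x] * !![0, 1; 1, y], by simp [det_fin_two, mul_comm]⟩

@[simp]
theorem coe_cfGenPair (x y : R) :
    (cfGenPair x y : Matrix (Fin 2) (Fin 2) R) = !![1, y; x, x * y + 1] := by
  ext i j; fin_cases i <;> fin_cases j <;> simp [cfGenPair, add_comm]

theorem map_cfGen_mul_cfGen (a b : ℕ) :
    (cfGen a * cfGen b).map ((↑) : ℤ → R) = cfGenPair (a : R) b := by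
  ext i j; fin_cases i <;> fin_cases j <;> simp [cfGen, cfGenPair]

theorem transvection_sub_mem_of_cfGenPair_mem {H : Subgroup SL(2, R)} {X : Set R}
    (hX : ∀ x ∈ X, ∀ y ∈ X, cfGenPair x y ∈ H) {i j : Fin 2} (hij : i ≠ j) {x z : R}
    (hx : x ∈ X) (hz : z ∈ X) : SpecialLinearGroup.transvection hij (x - z) ∈ H := by
  obtain ⟨rfl, rfl⟩ | ⟨rfl, rfl⟩ : i = 0 ∧ j = 1 ∨ i = 1 ∧ j = 0 := by omega
  · have h : cfGenPair z z * SpecialLinearGroup.transvection hij (x - z) = cfGenPair z x := by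
      ext i j; fin_cases i <;> fin_cases j <;> simp; ring
    exact (Subgroup.mul_mem_cancel_left _ (hX z hz z hz)).1 (h ▸ hX z hz x hx)
  · have h : SpecialLinearGroup.transvection hij (x - z) * cfGenPair z z = cfGenPair x z := by
      ext i j; fin_cases i <;> fin_cases j <;> simp; ring
    exact (Subgroup.mul_mem_cancel_right _ (hX z hz z hz)).1 (h ▸ hX x hx z hz)

end cfGenPair

theorem GammaSemigroup.mul_mem {A : Set ℕ} {γ₁ γ₂ : Matrix (Fin 2) (Fin 2) ℤ}
    (h₁ : γ₁ ∈ GammaSemigroup A) (h₂ : γ₂ ∈ GammaSemigroup A) : γ₁ * γ₂ ∈ GammaSemigroup A := by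
  obtain ⟨l₁, hl₁, hA₁, rfl⟩ := h₁
  obtain ⟨l₂, -, hA₂, rfl⟩ := h₂
  refine ⟨l₁ ++ l₂, by simp [hl₁], fun p hp ↦ ?_, by simp⟩
  rcases List.mem_append.1 hp with hp | hp
  exacts [hA₁ p hp, hA₂ p hp]

theorem cfGen_mul_cfGen_mem_gammaSemigroup {A : Set ℕ} {a b : ℕ} (ha : a ∈ A) (hb : b ∈ A) :
    cfGen a * cfGen b ∈ GammaSemigroup A :=
  ⟨[(a, b)], List.cons_ne_nil _ _, by simp [ha, hb], by simp⟩

def gammaSemigroupMod (A : Set ℕ) (q : ℕ) : Subsemigroup SL(2, ZMod q) where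
  carrier := {g | ∃ γ ∈ GammaSemigroup A, γ.map ((↑) : ℤ → ZMod q) = (g : Matrix _ _ (ZMod q))}
  mul_mem' := by
    rintro _ _ ⟨γ₁, hγ₁, h₁⟩ ⟨γ₂, hγ₂, h₂⟩
    exact ⟨γ₁ * γ₂, GammaSemigroup.mul_mem hγ₁ hγ₂,
      (Matrix.map_mul (f := Int.castRingHom (ZMod q))).trans (congrArg₂ (· * ·) h₁ h₂)⟩

theorem cfGenPair_mem_gammaSemigroupMod {A : Set ℕ} {q : ℕ} {a b : ℕ} (ha : a ∈ A) (hb : b ∈ A) :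
    cfGenPair (a : ZMod q) b ∈ gammaSemigroupMod A q :=
  ⟨_, cfGen_mul_cfGen_mem_gammaSemigroup ha hb, map_cfGen_mul_cfGen a b⟩

open Matrix.SpecialLinearGroup in
theorem hasEverywhereStrongApprox_of_forall_not_modEq {A : Set ℕ}
    (hA : ∀ k, 2 ≤ k → ∀ r, ∃ a ∈ A, ¬ a ≡ r [MOD k]) : HasEverywhereStrongApprox A := by
  intro q hq M hM
  have : NeZero q := ⟨by omega⟩
  obtain ⟨a₀, ha₀, -⟩ := hA 2 le_rfl 0
  let P := (gammaSemigroupMod A q).toSubgroupOfFinite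
    (Set.nonempty_of_mem (cfGenPair_mem_gammaSemigroupMod ha₀ ha₀))
  have hdiff {i j : Fin 2} (hij : i ≠ j) :
      ∀ x ∈ {x : ℤ | ∃ a ∈ A, ∃ c ∈ A, x = a - c}, transvection hij (x : ZMod q) ∈ P := by
    rintro _ ⟨a, ha, c, hc, rfl⟩
    push_cast
    exact transvection_sub_mem_of_cfGenPair_mem (X := (↑) '' A)
      (by rintro _ ⟨x, hx, rfl⟩ _ ⟨y, hy, rfl⟩; exact cfGenPair_mem_gammaSemigroupMod hx hy)
      hij ⟨a, ha, rfl⟩ ⟨c, hc, rfl⟩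
  have hEP : elementarySubgroup (Fin 2) (ZMod q) ≤ P := by
    rw [elementarySubgroup, Subgroup.closure_le]
    rintro _ ⟨i, j, hij, x, rfl⟩
    obtain ⟨n, rfl⟩ := ZMod.intCast_surjective x
    exact transvection_intCast_mem_of_mem_closure hij (hdiff hij)
      (AddSubgroup.closure_sub_eq_top_of_forall_not_modEq hA ▸ AddSubgroup.mem_top n)
  exact hEP (x := ⟨M, hM⟩) (by rw [elementarySubgroup_zmod_eq_top]; trivial)

theorem alphabet_in_residue_class_of_not_strong_approx (A : Finset ℕ)
    (h : ¬ HasEverywhereStrongApprox ↑A) :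
    ∃ k : ℕ, 2 ≤ k ∧ ∃ r : ℕ, ∀ a ∈ A, a ≡ r [MOD k] := by
  contrapose! h
  exact hasEverywhereStrongApprox_of_forall_not_modEq (by simpa using h)
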